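/- Let A ∈ B(H,K) be a nonzero compact operator and X ∈ B(H,K). Then the family of nonempty sets { unit vectors φ in the range of E_{A*A}[‖A‖²−δ, ‖A‖²] } is nested decreasing as δ decreases, and inf_{δ>0} sup over this set of Re⟨Xφ, Aφ⟩ equals the maximum of Re⟨Xφ, Aφ⟩ over unit vectors φ with A*Aφ = ‖A‖²φ. -/

import Mathlib

/-!
Write `T = A† A` and `a = ‖A‖²`. A unit vector `φ` in the spectral subspace of `[a - δ, a]` is
an approximate eigenvector, `‖T φ - a φ‖ ≤ δ`, and a genuine eigenvector for `a` lies in every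
such subspace. Since `T` is compact and `a ≠ 0`, any sequence of unit approximate eigenvectors
has a subsequence converging to a unit eigenvector. This gives a top eigenvector (starting from a
sequence with `‖A uₙ‖ → ‖A‖`), shows that the unit top eigenvectors form a compact set (so the
maximum `M` of `Re⟪A φ, X φ⟫` is attained), and shows that the sups over the spectral subspaces
drop below `M + ε` for small `δ`: otherwise a limit of unit vectors with values `≥ M + ε` would
be a unit top eigenvector exceeding `M`.
-/

open ContinuousLinearMap Filter Set

/-- The range of the spectral projection `E_T S` of a (selfadjoint) operator `T`
for a closed set `S ⊆ ℝ`. -/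
noncomputable def spectralSubspace {H : Type*} [NormedAddCommGroup H]
    [InnerProductSpace ℂ H] [CompleteSpace H] (T : H →L[ℂ] H) (S : Set ℝ) : Set H :=
  {φ | ∀ f : ℝ → ℝ, Continuous f → (∀ x ∈ S, f x = 0) → cfc f T φ = 0}

open scoped Topology

theorem ContinuousLinearMap.sub_algebraMap_apply {E : Type*} [NormedAddCommGroup E]
    [NormedSpace ℂ E] (T : E →L[ℂ] E) (c : ℝ) (φ : E) :
    (T - algebraMap ℝ (E →L[ℂ] E) c) φ = T φ - c • φ := by
  simp [Algebra.algebraMap_eq_smul_one]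

theorem ContinuousLinearMap.exists_seq_norm_apply_tendsto_opNorm {𝕜 E F : Type*}
    [RCLike 𝕜] [NormedAddCommGroup E] [NormedSpace 𝕜 E]
    [NormedAddCommGroup F] [NormedSpace 𝕜 F] (f : E →L[𝕜] F) :
    ∃ u : ℕ → E, (∀ n, ‖u n‖ ≤ 1) ∧ Tendsto (fun n ↦ ‖f (u n)‖) atTop (𝓝 ‖f‖) := by
  have hlt (n : ℕ) : ‖f‖ - 1 / ((n : ℝ) + 1) < ‖f‖ := sub_lt_self _ Nat.one_div_pos_of_nat
  choose u hu hfu using fun n ↦ f.exists_lt_apply_of_lt_opNorm (hlt n)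
  refine ⟨u, fun n ↦ (hu n).le, tendsto_of_tendsto_of_tendsto_of_le_of_le ?_
    tendsto_const_nhds (fun n ↦ (hfu n).le) fun n ↦ f.unit_le_opNorm _ (hu n).le⟩
  have h := (tendsto_const_nhds (x := ‖f‖)).sub (tendsto_one_div_add_atTop_nhds_zero_nat (𝕜 := ℝ))
  rwa [sub_zero] at h

theorem re_inner_apply_apply_le {H K : Type*} [NormedAddCommGroup H] [InnerProductSpace ℂ H]
    [NormedAddCommGroup K] [InnerProductSpace ℂ K] (A X : H →L[ℂ] K) {φ : H} (hφ : ‖φ‖ ≤ 1) :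
    (inner ℂ (A φ) (X φ)).re ≤ ‖A‖ * ‖X‖ :=
  (Complex.re_le_norm _).trans <| (norm_inner_le_norm _ _).trans <|
    mul_le_mul (A.unit_le_opNorm φ hφ) (X.unit_le_opNorm φ hφ) (norm_nonneg _) (norm_nonneg _)

theorem csInf_csSup_eq_of_forall_le_add {R : ℝ → Set ℝ} {M : ℝ} (hM : ∀ δ > 0, M ∈ R δ)
    (hR : ∀ δ > 0, BddAbove (R δ)) (hle : ∀ ε > 0, ∃ δ > 0, ∀ r ∈ R δ, r ≤ M + ε) :
    sInf {s | ∃ δ : ℝ, 0 < δ ∧ s = sSup (R δ)} = M := by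
  have hlower : ∀ s ∈ {s | ∃ δ : ℝ, 0 < δ ∧ s = sSup (R δ)}, M ≤ s := by
    rintro _ ⟨δ, hδ, rfl⟩
    exact le_csSup (hR δ hδ) (hM δ hδ)
  refine le_antisymm (le_of_forall_pos_le_add fun ε hε ↦ ?_)
    (le_csInf ⟨_, 1, one_pos, rfl⟩ hlower)
  obtain ⟨δ, hδ, hδε⟩ := hle ε hε
  exact (csInf_le ⟨M, hlower⟩ ⟨δ, hδ, rfl⟩).trans (csSup_le ⟨M, hM δ hδ⟩ hδε)

section CompactOperator

variable {𝕜 E : Type*} [NontriviallyNormedField 𝕜] [NormedAddCommGroup E] [NormedSpace 𝕜 E]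
  {T : E →L[𝕜] E}

theorem IsCompactOperator.exists_subseq_tendsto_of_tendsto_apply_sub_smul
    (hT : IsCompactOperator T) {a : 𝕜} (ha : a ≠ 0) {u : ℕ → E} {R : ℝ} (hu : ∀ n, ‖u n‖ ≤ R)
    (hlim : Tendsto (fun n ↦ T (u n) - a • u n) atTop (𝓝 0)) :
    ∃ (p : E) (ψ : ℕ → ℕ), StrictMono ψ ∧ Tendsto (u ∘ ψ) atTop (𝓝 p) ∧ T p = a • p := by
  obtain ⟨C, hC, hTC⟩ := hT.image_closedBall_subset_compact (f := (T : E →ₗ[𝕜] E)) R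
  obtain ⟨y, -, ψ, hψ, hy⟩ :=
    hC.tendsto_subseq fun n ↦ hTC ⟨u n, mem_closedBall_zero_iff.2 (hu n), rfl⟩
  have hp : Tendsto (u ∘ ψ) atTop (𝓝 (a⁻¹ • y)) := by
    have := (hy.sub (hlim.comp hψ.tendsto_atTop)).const_smul a⁻¹
    simpa [Function.comp_def, smul_smul, inv_mul_cancel₀ ha] using this
  refine ⟨a⁻¹ • y, ψ, hψ, hp, ?_⟩
  rw [tendsto_nhds_unique ((T.continuous.tendsto _).comp hp) hy, smul_inv_smul₀ ha]

theorem IsCompactOperator.isCompact_sphere_inter_eigenvectors (hT : IsCompactOperator T)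
    {a : 𝕜} (ha : a ≠ 0) : IsCompact {x : E | ‖x‖ = 1 ∧ T x = a • x} := by
  refine IsSeqCompact.isCompact fun u hu ↦ ?_
  obtain ⟨p, ψ, hψ, hp, hTp⟩ :=
    IsCompactOperator.exists_subseq_tendsto_of_tendsto_apply_sub_smul hT ha
    (fun n ↦ (hu n).1.le) (by simp [(hu _).2])
  have hnorm : ‖p‖ = 1 := tendsto_nhds_unique hp.norm (by simp [(hu _).1])
  exact ⟨p, ⟨hnorm, hTp⟩, ψ, hψ, hp⟩

end CompactOperator

section SpectralSubspace

variable {H : Type*} [NormedAddCommGroup H] [InnerProductSpace ℂ H] [CompleteSpace H]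
  {T : H →L[ℂ] H}

theorem spectralSubspace_mono {S S' : Set ℝ} (h : S ⊆ S') :
    spectralSubspace T S ⊆ spectralSubspace T S' :=
  fun _ hφ f hf hfS' ↦ hφ f hf fun x hx ↦ hfS' x (h hx)

theorem cfc_sub_const_eq_sub_algebraMap (hT : IsSelfAdjoint T) (c : ℝ) :
    cfc (fun x : ℝ ↦ x - c) T = T - algebraMap ℝ (H →L[ℂ] H) c := by
  rw [cfc_sub .., cfc_id' .., cfc_const ..]

theorem norm_apply_sub_smul_le_of_mem_spectralSubspace (hT : IsSelfAdjoint T) {c δ : ℝ}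
    (hδ : 0 ≤ δ) {φ : H} (hφ : φ ∈ spectralSubspace T (Icc (c - δ) (c + δ))) :
    ‖T φ - c • φ‖ ≤ δ * ‖φ‖ := by
  -- `x - c` is a function vanishing on `[c - δ, c + δ]` plus its clamp `k` to `[-δ, δ]`.
  set k : ℝ → ℝ := fun x ↦ max (-δ) (min (x - c) δ)
  have hk : ‖cfc k T‖ ≤ δ := norm_cfc_le hδ fun x _ ↦
    abs_le.2 ⟨le_max_left _ _, max_le (by linarith) (min_le_right _ _)⟩
  have hsplit : T - algebraMap ℝ (H →L[ℂ] H) c = cfc (fun x ↦ x - c - k x) T + cfc k T := by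
    rw [← cfc_add .., ← cfc_sub_const_eq_sub_algebraMap hT]
    simp
  have hvanish : cfc (fun x ↦ x - c - k x) T φ = 0 := hφ _ (by fun_prop) fun x hx ↦ by
    simp only [k, min_eq_left (show x - c ≤ δ by linarith [hx.2]),
      max_eq_right (show -δ ≤ x - c by linarith [hx.1]), sub_self]
  calc ‖T φ - c • φ‖ = ‖cfc k T φ‖ := by
        rw [← sub_algebraMap_apply, hsplit, add_apply, hvanish, zero_add]
    _ ≤ ‖cfc k T‖ * ‖φ‖ := (cfc k T).le_opNorm φ
    _ ≤ δ * ‖φ‖ := by gcongr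

theorem mem_spectralSubspace_of_apply_eq_smul (hT : IsSelfAdjoint T) {c : ℝ} {φ : H}
    (hφ : T φ = c • φ) {S : Set ℝ} (hc : c ∈ S) (hS : S ∈ 𝓝[spectrum ℝ T] c) :
    φ ∈ spectralSubspace T S := by
  -- `f = g · (x - c)`, where `g = f / (x - c)` is continuous on the spectrum because `f`
  -- vanishes near `c` there.
  intro f hf hfS
  set g : ℝ → ℝ := fun x ↦ f x / (x - c)
  have hfg : f = fun x ↦ g x * (x - c) := funext fun x ↦ (div_mul_cancel_of_imp fun hx ↦ by
    rw [sub_eq_zero.1 hx]; exact hfS c hc).symm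
  have hg : ContinuousOn g (spectrum ℝ T) := by
    intro x _
    rcases eq_or_ne x c with rfl | hxc
    · refine (continuousWithinAt_const (b := (0 : ℝ))).congr_of_eventuallyEq
        (mem_of_superset hS fun y hy ↦ ?_) (by simp [g, hfS x hc])
      simp [g, hfS y hy]
    · exact (hf.continuousAt.div (continuousAt_id.sub continuousAt_const)
        (sub_ne_zero.2 hxc)).continuousWithinAt
  rw [hfg, cfc_mul g (fun x ↦ x - c) T, cfc_sub_const_eq_sub_algebraMap hT, mul_apply_eq_comp,
    sub_algebraMap_apply, hφ, sub_self, map_zero]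

theorem IsCompactOperator.exists_forall_mem_spectralSubspace_le_add
    (hT : IsSelfAdjoint T) (hTc : IsCompactOperator T) {a : ℝ} (ha : a ≠ 0) {F : H → ℝ}
    (hF : Continuous F) {M : ℝ} (hM : ∀ ψ, ‖ψ‖ = 1 → T ψ = a • ψ → F ψ ≤ M) {ε : ℝ}
    (hε : 0 < ε) :
    ∃ δ > 0, ∀ φ ∈ spectralSubspace T (Icc (a - δ) (a + δ)), ‖φ‖ = 1 → F φ ≤ M + ε := by
  by_contra! h
  choose u hu hu1 hFu using fun n : ℕ ↦ h (1 / (n + 1)) Nat.one_div_pos_of_nat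
  have hlim : Tendsto (fun n ↦ T (u n) - (a : ℂ) • u n) atTop (𝓝 0) := by
    refine squeeze_zero_norm (fun n ↦ ?_) tendsto_one_div_add_atTop_nhds_zero_nat
    simpa [hu1 n, ← RCLike.real_smul_eq_coe_smul (K := ℂ)] using
      norm_apply_sub_smul_le_of_mem_spectralSubspace hT Nat.one_div_pos_of_nat.le (hu n)
  obtain ⟨p, ψ, hψ, hp, hTp⟩ := IsCompactOperator.exists_subseq_tendsto_of_tendsto_apply_sub_smul
    hTc (Complex.ofReal_ne_zero.2 ha) (fun n ↦ (hu1 n).le) hlim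
  have hp1 : ‖p‖ = 1 := tendsto_nhds_unique hp.norm (by simp [hu1])
  have hFp : M + ε ≤ F p :=
    ge_of_tendsto ((hF.tendsto p).comp hp) (Eventually.of_forall fun n ↦ (hFu (ψ n)).le)
  have := hM p hp1 (by rw [RCLike.real_smul_eq_coe_smul (K := ℂ)]; exact hTp)
  linarith

end SpectralSubspace

section AdjointCompSelf

variable {H K : Type*} [NormedAddCommGroup H] [InnerProductSpace ℂ H] [CompleteSpace H]
  [NormedAddCommGroup K] [InnerProductSpace ℂ K] [CompleteSpace K] (A : H →L[ℂ] K)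

theorem spectrum_adjoint_comp_self_le {x : ℝ} (hx : x ∈ spectrum ℝ (adjoint A ∘L A)) :
    x ≤ ‖A‖ ^ 2 := by
  have hT := (isPositive_adjoint_comp_self A).isSelfAdjoint
  rw [sq, ← norm_adjoint_comp_self]
  exact (le_algebraMap_iff_spectrum_le hT).1 hT.le_algebraMap_norm_self x hx

theorem mem_spectralSubspace_adjoint_comp_self {δ : ℝ} (hδ : 0 < δ) {φ : H}
    (hφ : (adjoint A ∘L A) φ = (‖A‖ ^ 2 : ℝ) • φ) :
    φ ∈ spectralSubspace (adjoint A ∘L A) (Icc (‖A‖ ^ 2 - δ) (‖A‖ ^ 2)) :=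
  mem_spectralSubspace_of_apply_eq_smul (isPositive_adjoint_comp_self A).isSelfAdjoint hφ
    ⟨by linarith, le_rfl⟩ (nhdsWithin_mono _ (fun _ ↦ spectrum_adjoint_comp_self_le A)
      (Icc_mem_nhdsLE (by linarith)))

theorem norm_adjoint_comp_self_apply_sub_sq_le {x : H} (hx : ‖x‖ ≤ 1) :
    ‖(adjoint A ∘L A) x - (‖A‖ ^ 2 : ℝ) • x‖ ^ 2 ≤ 2 * ‖A‖ ^ 2 * (‖A‖ ^ 2 - ‖A x‖ ^ 2) := by
  have hTx : ‖(adjoint A ∘L A) x‖ ≤ ‖A‖ ^ 2 := by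
    simpa [norm_adjoint_comp_self, sq] using (adjoint A ∘L A).unit_le_opNorm x hx
  have hx2 : ‖x‖ ^ 2 ≤ 1 := pow_le_one₀ (norm_nonneg x) hx
  rw [norm_sub_sq (𝕜 := ℂ), RCLike.real_smul_eq_coe_smul (K := ℂ), inner_smul_right,
    RCLike.re_ofReal_mul, ← apply_norm_sq_eq_inner_adjoint_left, norm_smul, mul_pow,
    RCLike.norm_ofReal, abs_of_nonneg (by positivity)]
  nlinarith [pow_le_pow_left₀ (norm_nonneg _) hTx 2]

theorem tendsto_adjoint_comp_self_apply_sub_smul {u : ℕ → H} (hu : ∀ n, ‖u n‖ ≤ 1)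
    (hAu : Tendsto (fun n ↦ ‖A (u n)‖) atTop (𝓝 ‖A‖)) :
    Tendsto (fun n ↦ (adjoint A ∘L A) (u n) - (‖A‖ ^ 2 : ℝ) • u n) atTop (𝓝 0) := by
  have hbound : Tendsto (fun n ↦ 2 * ‖A‖ ^ 2 * (‖A‖ ^ 2 - ‖A (u n)‖ ^ 2)) atTop
      (𝓝 (2 * ‖A‖ ^ 2 * (‖A‖ ^ 2 - ‖A‖ ^ 2))) :=
    (tendsto_const_nhds.sub (hAu.pow 2)).const_mul _
  have hsq : Tendsto (fun n ↦ ‖(adjoint A ∘L A) (u n) - (‖A‖ ^ 2 : ℝ) • u n‖ ^ 2) atTop (𝓝 0) :=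
    squeeze_zero (fun _ ↦ by positivity) (fun n ↦ norm_adjoint_comp_self_apply_sub_sq_le A (hu n))
      (by simpa using hbound)
  simpa [tendsto_zero_iff_norm_tendsto_zero, Real.sqrt_sq (norm_nonneg _)] using hsq.sqrt

variable {A}

theorem IsCompactOperator.exists_norm_eq_one_adjoint_comp_self_apply_eq
    (hcpt : IsCompactOperator A) (hA : A ≠ 0) :
    ∃ p : H, ‖p‖ = 1 ∧ (adjoint A ∘L A) p = (‖A‖ ^ 2 : ℝ) • p := by
  have ha : 0 < ‖A‖ ^ 2 := by positivity
  obtain ⟨u, hu, hAu⟩ := A.exists_seq_norm_apply_tendsto_opNorm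
  have hlim := tendsto_adjoint_comp_self_apply_sub_smul A hu hAu
  simp_rw [RCLike.real_smul_eq_coe_smul (K := ℂ)] at hlim ⊢
  obtain ⟨p, ψ, hψ, hp, hTp⟩ := IsCompactOperator.exists_subseq_tendsto_of_tendsto_apply_sub_smul
    (hcpt.clm_comp (adjoint A)) (Complex.ofReal_ne_zero.2 ha.ne') hu hlim
  have hAp : ‖A p‖ = ‖A‖ :=
    tendsto_nhds_unique ((A.continuous.norm.tendsto p).comp hp) (hAu.comp hψ.tendsto_atTop)
  have hp0 : p ≠ 0 := by
    rintro rfl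
    exact hA (norm_eq_zero.1 (by simpa using hAp.symm))
  refine ⟨(‖p‖⁻¹ : ℂ) • p, norm_smul_inv_norm hp0, ?_⟩
  rw [map_smul, hTp]
  exact smul_comm _ _ _

theorem IsCompactOperator.isCompact_sphere_inter_adjoint_comp_self_eigenvectors
    (hcpt : IsCompactOperator A) (hA : A ≠ 0) :
    IsCompact {x : H | ‖x‖ = 1 ∧ (adjoint A ∘L A) x = (‖A‖ ^ 2 : ℝ) • x} := by
  simp_rw [RCLike.real_smul_eq_coe_smul (K := ℂ)]
  exact IsCompactOperator.isCompact_sphere_inter_eigenvectors (hcpt.clm_comp (adjoint A))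
    (Complex.ofReal_ne_zero.2 (pow_pos (norm_pos_iff.2 hA) 2).ne')

end AdjointCompSelf

theorem inf_sup_eq_max_for_compact
    {H K : Type*} [NormedAddCommGroup H] [InnerProductSpace ℂ H] [CompleteSpace H]
    [NormedAddCommGroup K] [InnerProductSpace ℂ K] [CompleteSpace K]
    (A X : H →L[ℂ] K) (hA : A ≠ 0) (hcpt : IsCompactOperator A) :
    (∀ δ₁ δ₂ : ℝ, 0 < δ₁ → δ₁ ≤ δ₂ →
      spectralSubspace ((adjoint A) ∘L A) (Set.Icc (‖A‖ ^ 2 - δ₁) (‖A‖ ^ 2)) ⊆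
        spectralSubspace ((adjoint A) ∘L A) (Set.Icc (‖A‖ ^ 2 - δ₂) (‖A‖ ^ 2))) ∧
    (∀ δ : ℝ, 0 < δ → ∃ φ : H,
      φ ∈ spectralSubspace ((adjoint A) ∘L A) (Set.Icc (‖A‖ ^ 2 - δ) (‖A‖ ^ 2)) ∧
      ‖φ‖ = 1) ∧
    ∃ φ₀ : H, ‖φ₀‖ = 1 ∧ ((adjoint A) ∘L A) φ₀ = (‖A‖ ^ 2 : ℝ) • φ₀ ∧
      (∀ ψ : H, ‖ψ‖ = 1 → ((adjoint A) ∘L A) ψ = (‖A‖ ^ 2 : ℝ) • ψ →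
        (inner ℂ (A ψ) (X ψ) : ℂ).re ≤ (inner ℂ (A φ₀) (X φ₀) : ℂ).re) ∧
      sInf {s : ℝ | ∃ δ : ℝ, 0 < δ ∧
        s = sSup {r : ℝ | ∃ φ : H,
          φ ∈ spectralSubspace ((adjoint A) ∘L A) (Set.Icc (‖A‖ ^ 2 - δ) (‖A‖ ^ 2)) ∧
          ‖φ‖ = 1 ∧ r = (inner ℂ (A φ) (X φ) : ℂ).re}} =
        (inner ℂ (A φ₀) (X φ₀) : ℂ).re := by
  have hF : Continuous fun φ : H ↦ (inner ℂ (A φ) (X φ)).re := by fun_prop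
  obtain ⟨φ₀, ⟨hφ₀, hTφ₀⟩, hmax⟩ :=
    (hcpt.isCompact_sphere_inter_adjoint_comp_self_eigenvectors hA).exists_isMaxOn
      (hcpt.exists_norm_eq_one_adjoint_comp_self_apply_eq hA) hF.continuousOn
  refine ⟨fun δ₁ δ₂ _ h ↦ spectralSubspace_mono (Icc_subset_Icc_left (by linarith)),
    fun δ hδ ↦ ⟨φ₀, mem_spectralSubspace_adjoint_comp_self A hδ hTφ₀, hφ₀⟩,
    φ₀, hφ₀, hTφ₀, fun ψ h1 h2 ↦ hmax ⟨h1, h2⟩, ?_⟩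
  refine csInf_csSup_eq_of_forall_le_add
    (fun δ hδ ↦ ⟨φ₀, mem_spectralSubspace_adjoint_comp_self A hδ hTφ₀, hφ₀, rfl⟩)
    (fun δ _ ↦ ⟨‖A‖ * ‖X‖, ?_⟩) fun ε hε ↦ ?_
  · rintro _ ⟨φ, -, hφ, rfl⟩
    exact re_inner_apply_apply_le A X hφ.le
  · obtain ⟨δ, hδ, hle⟩ := IsCompactOperator.exists_forall_mem_spectralSubspace_le_add
      (isPositive_adjoint_comp_self A).isSelfAdjoint (hcpt.clm_comp (adjoint A))
      (pow_pos (norm_pos_iff.2 hA) 2).ne' hF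
      (fun ψ h1 h2 ↦ hmax ⟨h1, h2⟩) hε
    exact ⟨δ, hδ, fun _ ⟨φ, hφS, hφ, hr⟩ ↦ hr ▸ hle φ
      (spectralSubspace_mono (Icc_subset_Icc_right (by linarith)) hφS) hφ⟩
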